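/- arXiv:1411.4433 — 7 statements merged into one kernel-verified Lean document; each statement's English description precedes it below -/
import Mathlib

section
/- Let ≡ be an equivalence relation on states σ : IN → ℝ × IT that is preserved by the update operation, i.e., σ ≡ τ implies σ[ι ↦ (r,I)] ≡ τ[ι ↦ (r,I)]. Then stochastic system bisimilarity with respect to ≡ is a congruence for prefix with influence: if P₁ ~_s^≡ P₂ then a:(ι,r,I).P₁ ~_s^≡ a:(ι,r,I).P₂. -/
open Classical

noncomputable section

/-- Operational states of stochastic HYPE: each influence name is mapped to a
strength and an influence type name. -/
abbrev HState (IN IT : Type) := IN → ℝ × IT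

/-- Syntax of (a fragment of) stochastic HYPE processes: nil, prefix with
influence, prefix without influence, choice, and cooperation over a set of
events. -/
inductive HProc (IN IT E : Type) : Type where
  | nil : HProc IN IT E
  | iprefix (a : E) (ι : IN) (r : ℝ) (I : IT) (P : HProc IN IT E) : HProc IN IT E
  | eprefix (a : E) (P : HProc IN IT E) : HProc IN IT E
  | choice (P Q : HProc IN IT E) : HProc IN IT E
  | coop (L : Set E) (P Q : HProc IN IT E) : HProc IN IT E

variable {IN IT E : Type}

/-- Definedness condition of the state-merging function `Γ`. -/
def GammaDef (σ τ τ' : HState IN IT) : Prop := ∀ ι, σ ι = τ' ι ∨ σ ι = τ ι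

/-- The state-merging function `Γ(σ,τ,τ')` used in cooperation with
synchronisation: `Γ(σ,τ,τ')(ι) = τ(ι)` if `σ(ι) = τ'(ι)`, else `τ'(ι)`. -/
def Gamma (σ τ τ' : HState IN IT) : HState IN IT :=
  fun ι => if σ ι = τ' ι then τ ι else τ' ι

/-- The labelled multi-transition system of stochastic HYPE, as a multiset of
(event, derivative process, resulting state) triples; multiplicities are kept
so that cumulative rates of stochastic events can be defined. -/
def hnext : HProc IN IT E → HState IN IT → Multiset (E × HProc IN IT E × HState IN IT)
  | .nil, _ => 0
  | .iprefix a ι r I P, σ => {(a, P, Function.update σ ι (r, I))}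
  | .eprefix a P, σ => {(a, P, σ)}
  | .choice P Q, σ => hnext P σ + hnext Q σ
  | .coop L P Q, σ =>
      (((hnext P σ).filter (fun t => t.1 ∉ L)).map
        (fun t => (t.1, HProc.coop L t.2.1 Q, t.2.2))) +
      (((hnext Q σ).filter (fun t => t.1 ∉ L)).map
        (fun t => (t.1, HProc.coop L P t.2.1, t.2.2))) +
      ((hnext P σ).bind (fun t =>
        (((hnext Q σ).filter
            (fun u => u.1 = t.1 ∧ t.1 ∈ L ∧ GammaDef σ t.2.2 u.2.2)).map
          (fun u => (t.1, HProc.coop L t.2.1 u.2.1, Gamma σ t.2.2 u.2.2)))))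

/-- The transition relation `⟨P,σ⟩ --a--> ⟨P',σ'⟩`. -/
def HTrans (c : HProc IN IT E × HState IN IT) (a : E)
    (c' : HProc IN IT E × HState IN IT) : Prop :=
  (a, c'.1, c'.2) ∈ hnext c.1 c.2

/-- Cumulative rate `r(⟨P,σ⟩, a, C)` of stochastic event `a` from `⟨P,σ⟩` into
the set of configurations `C`: the activation rate `act a` times the number
(with multiplicity) of `a`-labelled transitions into `C`. -/
def hrate (act : E → ℝ) (P : HProc IN IT E) (σ : HState IN IT) (a : E)
    (C : Set (HProc IN IT E × HState IN IT)) : ℝ :=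
  act a * (((hnext P σ).filter (fun t => t.1 = a ∧ (t.2.1, t.2.2) ∈ C)).card : ℝ)

/-- Stochastic system bisimulation with respect to an equivalence `eqv` over
states: an equivalence `B` over processes such that for related processes and
`eqv`-related states, instantaneous transitions into each equivalence class of
configurations (modulo `B` and `eqv`) are matched, and cumulative stochastic
rates into each class coincide. `Es` is the set of stochastic events; events
outside `Es` are instantaneous. -/
def IsSSB (Es : Set E) (act : E → ℝ)
    (eqv : HState IN IT → HState IN IT → Prop)
    (B : HProc IN IT E → HProc IN IT E → Prop) : Prop :=
  Equivalence B ∧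
  ∀ P Q, B P Q → ∀ σ τ, eqv σ τ →
    ∀ C : Set (HProc IN IT E × HState IN IT),
      (∃ c₀ : HProc IN IT E × HState IN IT, C = {d | B c₀.1 d.1 ∧ eqv c₀.2 d.2}) →
      ((∀ a, a ∉ Es → ∀ c', HTrans (P, σ) a c' → c' ∈ C →
          ∃ d' ∈ C, HTrans (Q, τ) a d') ∧
       (∀ a, a ∉ Es → ∀ d', HTrans (Q, τ) a d' → d' ∈ C →
          ∃ c' ∈ C, HTrans (P, σ) a c')) ∧
      (∀ a ∈ Es, hrate act P σ a C = hrate act Q τ a C)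

/-- Stochastic system bisimilarity with respect to `eqv`. -/
def SSBisim (Es : Set E) (act : E → ℝ)
    (eqv : HState IN IT → HState IN IT → Prop)
    (P Q : HProc IN IT E) : Prop :=
  ∃ B, IsSSB Es act eqv B ∧ B P Q

/-- if the equivalence `eqv` over states is preserved by updates,
then stochastic system bisimilarity with respect to `eqv` is a congruence for
prefix with influence. -/
theorem stmt5 (Es : Set E) (act : E → ℝ)
    (eqv : HState IN IT → HState IN IT → Prop) (heqv : Equivalence eqv)
    (hupd : ∀ (σ τ : HState IN IT) (ι : IN) (r : ℝ) (I : IT),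
      eqv σ τ → eqv (Function.update σ ι (r, I)) (Function.update τ ι (r, I)))
    (a : E) (ι : IN) (r : ℝ) (I : IT) (P₁ P₂ : HProc IN IT E)
    (h : SSBisim Es act eqv P₁ P₂) :
    SSBisim Es act eqv (HProc.iprefix a ι r I P₁) (HProc.iprefix a ι r I P₂) := by
  classical
  obtain ⟨B, ⟨hBeq, hB⟩, hP⟩ := h
  set p₁ := HProc.iprefix a ι r I P₁ with hp₁def
  set p₂ := HProc.iprefix a ι r I P₂ with hp₂def
  -- the saturated relation
  set B' : HProc IN IT E → HProc IN IT E → Prop := fun X Y =>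
    B X Y ∨ (B X p₁ ∧ B p₂ Y) ∨ (B X p₂ ∧ B p₁ Y) with hB'def
  have hB'refl : ∀ X, B' X X := fun X => Or.inl (hBeq.refl X)
  have hB'symm : ∀ {X Y}, B' X Y → B' Y X := by
    rintro X Y (h | ⟨h1, h2⟩ | ⟨h1, h2⟩)
    · exact Or.inl (hBeq.symm h)
    · exact Or.inr (Or.inr ⟨hBeq.symm h2, hBeq.symm h1⟩)
    · exact Or.inr (Or.inl ⟨hBeq.symm h2, hBeq.symm h1⟩)
  have hB'trans : ∀ {X Y Z}, B' X Y → B' Y Z → B' X Z := by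
    rintro X Y Z (h | ⟨h1, h2⟩ | ⟨h1, h2⟩) (g | ⟨g1, g2⟩ | ⟨g1, g2⟩)
    · exact Or.inl (hBeq.trans h g)
    · exact Or.inr (Or.inl ⟨hBeq.trans h g1, g2⟩)
    · exact Or.inr (Or.inr ⟨hBeq.trans h g1, g2⟩)
    · exact Or.inr (Or.inl ⟨h1, hBeq.trans h2 g⟩)
    · exact Or.inl (hBeq.trans h1
        (hBeq.trans (hBeq.symm (hBeq.trans h2 g1)) g2))
    · exact Or.inl (hBeq.trans h1 g2)
    · exact Or.inr (Or.inr ⟨h1, hBeq.trans h2 g⟩)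
    · exact Or.inl (hBeq.trans h1 g2)
    · exact Or.inl (hBeq.trans h1
        (hBeq.trans (hBeq.symm (hBeq.trans h2 g1)) g2))
  have hB'equiv : Equivalence B' := ⟨hB'refl, fun h => hB'symm h, fun h g => hB'trans h g⟩
  -- the B'-classes of configurations
  set Cl : (HProc IN IT E × HState IN IT) → Set (HProc IN IT E × HState IN IT) :=
    fun c₀ => {d | B' c₀.1 d.1 ∧ eqv c₀.2 d.2} with hCldef
  -- closure of a class under B-steps
  have hcl : ∀ (c₀ c' : HProc IN IT E × HState IN IT) (y : HProc IN IT E)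
      (t : HState IN IT), c' ∈ Cl c₀ → B c'.1 y → eqv c'.2 t → (y, t) ∈ Cl c₀ := by
    intro c₀ c' y t hc' hby het
    exact ⟨hB'trans hc'.1 (Or.inl hby), heqv.trans hc'.2 het⟩
  -- membership in a class is invariant under B-related processes and eqv-related states
  have hmem : ∀ (c₀ : HProc IN IT E × HState IN IT) (Q₁ Q₂ : HProc IN IT E)
      (u v : HState IN IT), B Q₁ Q₂ → eqv u v → ((Q₁, u) ∈ Cl c₀ ↔ (Q₂, v) ∈ Cl c₀) := by
    intro c₀ Q₁ Q₂ u v hq he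
    constructor
    · rintro ⟨h1, h2⟩; exact ⟨hB'trans h1 (Or.inl hq), heqv.trans h2 he⟩
    · rintro ⟨h1, h2⟩
      exact ⟨hB'trans h1 (Or.inl (hBeq.symm hq)), heqv.trans h2 (heqv.symm he)⟩
  -- instantaneous transfer along a B-pair, into a B'-class
  have T1 : ∀ (X Y : HProc IN IT E), B X Y → ∀ (σ' τ' : HState IN IT), eqv σ' τ' →
      ∀ (c₀ : HProc IN IT E × HState IN IT), ∀ a', a' ∉ Es →
      ∀ c', HTrans (X, σ') a' c' → c' ∈ Cl c₀ → ∃ d' ∈ Cl c₀, HTrans (Y, τ') a' d' := by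
    intro X Y hXY σ' τ' hst c₀ a' ha' c' htr hc'
    obtain ⟨d', hd'D, htd⟩ :=
      ((hB X Y hXY σ' τ' hst {d | B c'.1 d.1 ∧ eqv c'.2 d.2} ⟨c', rfl⟩).1).1
        a' ha' c' htr ⟨hBeq.refl _, heqv.refl _⟩
    exact ⟨d', ⟨hB'trans hc'.1 (Or.inl hd'D.1), heqv.trans hc'.2 hd'D.2⟩, htd⟩
  -- instantaneous transfer between two prefixed processes
  have T2 : ∀ (Q₁ Q₂ : HProc IN IT E), B Q₁ Q₂ → ∀ (σ' τ' : HState IN IT), eqv σ' τ' →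
      ∀ (c₀ : HProc IN IT E × HState IN IT), ∀ a',
      ∀ c', HTrans (HProc.iprefix a ι r I Q₁, σ') a' c' → c' ∈ Cl c₀ →
        ∃ d' ∈ Cl c₀, HTrans (HProc.iprefix a ι r I Q₂, τ') a' d' := by
    intro Q₁ Q₂ hq σ' τ' hst c₀ a' c' htr hc'
    have htr' := htr
    simp only [HTrans, hnext, Multiset.mem_singleton, Prod.mk.injEq] at htr'
    obtain ⟨ha', h1, h2⟩ := htr'
    have hc'eq : c' = (Q₁, Function.update σ' ι (r, I)) := Prod.ext h1 h2
    refine ⟨(Q₂, Function.update τ' ι (r, I)), ?_, ?_⟩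
    · exact (hmem c₀ Q₁ Q₂ _ _ hq (hupd σ' τ' ι r I hst)).1 (hc'eq ▸ hc')
    · subst ha'; simp [HTrans, hnext]
  -- rate of a prefixed process
  have hrate_pre : ∀ (Q : HProc IN IT E) (σ' : HState IN IT) (a' : E)
      (C : Set (HProc IN IT E × HState IN IT)),
      hrate act (HProc.iprefix a ι r I Q) σ' a' C =
        act a' * (if a = a' ∧ (Q, Function.update σ' ι (r, I)) ∈ C then 1 else 0) := by
    intro Q σ' a' C
    unfold hrate
    congr 1
    rw [hnext, Multiset.filter_singleton]
    by_cases hc : a = a' ∧ (Q, Function.update σ' ι (r, I)) ∈ C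
    · rw [if_pos hc, if_pos hc]; simp
    · rw [if_neg hc, if_neg hc]; simp
  -- rate transfer between two prefixed processes, into a B'-class
  have R2 : ∀ (Q₁ Q₂ : HProc IN IT E), B Q₁ Q₂ → ∀ (σ' τ' : HState IN IT), eqv σ' τ' →
      ∀ (c₀ : HProc IN IT E × HState IN IT), ∀ a',
      hrate act (HProc.iprefix a ι r I Q₁) σ' a' (Cl c₀) =
      hrate act (HProc.iprefix a ι r I Q₂) τ' a' (Cl c₀) := by
    intro Q₁ Q₂ hq σ' τ' hst c₀ a'
    rw [hrate_pre, hrate_pre]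
    congr 1
    have := hmem c₀ Q₁ Q₂ _ _ hq (hupd σ' τ' ι r I hst)
    by_cases hx : a = a' <;> simp [hx, this]
  -- additivity of rates over disjoint unions
  have hrate_split : ∀ (X : HProc IN IT E) (σ' : HState IN IT) (a' : E)
      (C D : Set (HProc IN IT E × HState IN IT)),
      (∀ d, d ∈ C → d ∈ D → False) →
      hrate act X σ' a' (C ∪ D) = hrate act X σ' a' C + hrate act X σ' a' D := by
    intro X σ' a' C D hdisj
    unfold hrate
    rw [← mul_add, ← Nat.cast_add]
    congr 1
    congr 1
    induction hnext X σ' using Multiset.induction_on with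
    | empty => simp
    | cons t s ih =>
      by_cases hC : t.1 = a' ∧ (t.2.1, t.2.2) ∈ C
      · have hD : ¬(t.1 = a' ∧ (t.2.1, t.2.2) ∈ D) := fun h => hdisj _ hC.2 h.2
        have hU : t.1 = a' ∧ (t.2.1, t.2.2) ∈ C ∪ D := ⟨hC.1, Or.inl hC.2⟩
        simp only [Multiset.filter_cons, if_pos hU, if_pos hC, if_neg hD, Multiset.card_add,
          Multiset.card_singleton, Multiset.card_zero, ih]
        omega
      · by_cases hD : t.1 = a' ∧ (t.2.1, t.2.2) ∈ D
        · have hU : t.1 = a' ∧ (t.2.1, t.2.2) ∈ C ∪ D := ⟨hD.1, Or.inr hD.2⟩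
          simp only [Multiset.filter_cons, if_pos hU, if_pos hD, if_neg hC, Multiset.card_add,
            Multiset.card_singleton, Multiset.card_zero, ih]
          omega
        · have hU : ¬(t.1 = a' ∧ (t.2.1, t.2.2) ∈ C ∪ D) := by
            rintro ⟨h1, h2 | h2⟩
            exacts [hC ⟨h1, h2⟩, hD ⟨h1, h2⟩]
          simp only [Multiset.filter_cons, if_neg hU, if_neg hC, if_neg hD, Multiset.card_add,
            Multiset.card_zero, ih]
          omega
  -- rate transfer along a B-pair, into a B'-class
  have R1 : ∀ (X Y : HProc IN IT E), B X Y → ∀ (σ' τ' : HState IN IT), eqv σ' τ' →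
      ∀ (c₀ : HProc IN IT E × HState IN IT), ∀ a' ∈ Es,
      hrate act X σ' a' (Cl c₀) = hrate act Y τ' a' (Cl c₀) := by
    intro X Y hXY σ' τ' hst c₀ a' ha'
    obtain ⟨x, s⟩ := c₀
    have rateB : ∀ (z : HProc IN IT E) (u : HState IN IT),
        hrate act X σ' a' {d | B z d.1 ∧ eqv u d.2} =
        hrate act Y τ' a' {d | B z d.1 ∧ eqv u d.2} := by
      intro z u
      exact (hB X Y hXY σ' τ' hst {d | B (z, u).1 d.1 ∧ eqv (z, u).2 d.2}
        ⟨(z, u), rfl⟩).2 a' ha'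
    by_cases h1 : B x p₁ <;> by_cases h2 : B x p₂
    · -- both: the class collapses to a B-class
      have hCeq : Cl (x, s) = {d | B x d.1 ∧ eqv s d.2} := by
        ext d
        constructor
        · rintro ⟨(hb | ⟨hb1, hb2⟩ | ⟨hb1, hb2⟩), he⟩
          · exact ⟨hb, he⟩
          · exact ⟨hBeq.trans h2 hb2, he⟩
          · exact ⟨hBeq.trans h1 hb2, he⟩
        · rintro ⟨hb, he⟩; exact ⟨Or.inl hb, he⟩
      rw [hCeq]; exact rateB x s
    · -- only B x p₁ : class is the disjoint union of the classes of x and p₂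
      have hCeq : Cl (x, s) =
          {d | B x d.1 ∧ eqv s d.2} ∪ {d | B p₂ d.1 ∧ eqv s d.2} := by
        ext d
        constructor
        · rintro ⟨(hb | ⟨hb1, hb2⟩ | ⟨hb1, hb2⟩), he⟩
          · exact Or.inl ⟨hb, he⟩
          · exact Or.inr ⟨hb2, he⟩
          · exact absurd hb1 h2
        · rintro (⟨hb, he⟩ | ⟨hb, he⟩)
          · exact ⟨Or.inl hb, he⟩
          · exact ⟨Or.inr (Or.inl ⟨h1, hb⟩), he⟩
      have hdisj : ∀ d : HProc IN IT E × HState IN IT, d ∈ {d | B x d.1 ∧ eqv s d.2} →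
          d ∈ {d | B p₂ d.1 ∧ eqv s d.2} → False := by
        rintro d ⟨hb1, _⟩ ⟨hb2, _⟩
        exact h2 (hBeq.trans hb1 (hBeq.symm hb2))
      rw [hCeq, hrate_split X σ' a' _ _ hdisj, hrate_split Y τ' a' _ _ hdisj,
        rateB x s, rateB p₂ s]
    · -- only B x p₂
      have hCeq : Cl (x, s) =
          {d | B x d.1 ∧ eqv s d.2} ∪ {d | B p₁ d.1 ∧ eqv s d.2} := by
        ext d
        constructor
        · rintro ⟨(hb | ⟨hb1, hb2⟩ | ⟨hb1, hb2⟩), he⟩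
          · exact Or.inl ⟨hb, he⟩
          · exact absurd hb1 h1
          · exact Or.inr ⟨hb2, he⟩
        · rintro (⟨hb, he⟩ | ⟨hb, he⟩)
          · exact ⟨Or.inl hb, he⟩
          · exact ⟨Or.inr (Or.inr ⟨h2, hb⟩), he⟩
      have hdisj : ∀ d : HProc IN IT E × HState IN IT, d ∈ {d | B x d.1 ∧ eqv s d.2} →
          d ∈ {d | B p₁ d.1 ∧ eqv s d.2} → False := by
        rintro d ⟨hb1, _⟩ ⟨hb2, _⟩
        exact h1 (hBeq.trans hb1 (hBeq.symm hb2))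
      rw [hCeq, hrate_split X σ' a' _ _ hdisj, hrate_split Y τ' a' _ _ hdisj,
        rateB x s, rateB p₁ s]
    · -- neither: the class collapses to a B-class
      have hCeq : Cl (x, s) = {d | B x d.1 ∧ eqv s d.2} := by
        ext d
        constructor
        · rintro ⟨(hb | ⟨hb1, hb2⟩ | ⟨hb1, hb2⟩), he⟩
          · exact ⟨hb, he⟩
          · exact absurd hb1 h1
          · exact absurd hb1 h2
        · rintro ⟨hb, he⟩; exact ⟨Or.inl hb, he⟩
      rw [hCeq]; exact rateB x s
  -- forward simulation for any B'-pair
  have Fwd : ∀ (X Y : HProc IN IT E), B' X Y → ∀ (σ' τ' : HState IN IT), eqv σ' τ' →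
      ∀ (c₀ : HProc IN IT E × HState IN IT), ∀ a', a' ∉ Es →
      ∀ c', HTrans (X, σ') a' c' → c' ∈ Cl c₀ → ∃ d' ∈ Cl c₀, HTrans (Y, τ') a' d' := by
    rintro X Y (hxy | ⟨h1, h2⟩ | ⟨h1, h2⟩) σ' τ' hst c₀ a' ha' c' htr hc'
    · exact T1 X Y hxy σ' τ' hst c₀ a' ha' c' htr hc'
    · obtain ⟨d1, hd1, ht1⟩ :=
        T1 X p₁ h1 σ' σ' (heqv.refl σ') c₀ a' ha' c' htr hc'
      obtain ⟨d2, hd2, ht2⟩ := T2 P₁ P₂ hP σ' τ' hst c₀ a' d1 ht1 hd1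
      exact T1 p₂ Y h2 τ' τ' (heqv.refl τ') c₀ a' ha' d2 ht2 hd2
    · obtain ⟨d1, hd1, ht1⟩ :=
        T1 X p₂ h1 σ' σ' (heqv.refl σ') c₀ a' ha' c' htr hc'
      obtain ⟨d2, hd2, ht2⟩ := T2 P₂ P₁ (hBeq.symm hP) σ' τ' hst c₀ a' d1 ht1 hd1
      exact T1 p₁ Y h2 τ' τ' (heqv.refl τ') c₀ a' ha' d2 ht2 hd2
  -- rate equality for any B'-pair
  have Rates : ∀ (X Y : HProc IN IT E), B' X Y → ∀ (σ' τ' : HState IN IT), eqv σ' τ' →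
      ∀ (c₀ : HProc IN IT E × HState IN IT), ∀ a' ∈ Es,
      hrate act X σ' a' (Cl c₀) = hrate act Y τ' a' (Cl c₀) := by
    rintro X Y (hxy | ⟨h1, h2⟩ | ⟨h1, h2⟩) σ' τ' hst c₀ a' ha'
    · exact R1 X Y hxy σ' τ' hst c₀ a' ha'
    · rw [R1 X p₁ h1 σ' σ' (heqv.refl σ') c₀ a' ha',
        R2 P₁ P₂ hP σ' τ' hst c₀ a']
      exact R1 p₂ Y h2 τ' τ' (heqv.refl τ') c₀ a' ha'
    · rw [R1 X p₂ h1 σ' σ' (heqv.refl σ') c₀ a' ha',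
        R2 P₂ P₁ (hBeq.symm hP) σ' τ' hst c₀ a']
      exact R1 p₁ Y h2 τ' τ' (heqv.refl τ') c₀ a' ha'
  refine ⟨B', ⟨hB'equiv, ?_⟩, Or.inr (Or.inl ⟨hBeq.refl p₁, hBeq.refl p₂⟩)⟩
  rintro X Y hXY σ' τ' hst C ⟨c₀, rfl⟩
  refine ⟨⟨?_, ?_⟩, ?_⟩
  · intro a' ha' c' htr hc'
    exact Fwd X Y hXY σ' τ' hst c₀ a' ha' c' htr hc'
  · intro a' ha' d' htr hd'
    exact Fwd Y X (hB'symm hXY) τ' σ' (heqv.symm hst) c₀ a' ha' d' htr hd'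
  · intro a' ha'
    exact Rates X Y hXY σ' τ' hst c₀ a' ha'
end
end

section
/- Stochastic system bisimilarity with respect to ≡ is a congruence for choice: if P₁ ~_s^≡ P₂ then for any process Q, P₁ + Q ~_s^≡ P₂ + Q, where the cumulative rate function satisfies r(⟨P+Q,σ⟩, a, C) = r(⟨P,σ⟩, a, C) + r(⟨Q,σ⟩, a, C) for stochastic events a. -/
open Classical

noncomputable section

variable {IN IT E : Type}

lemma hrate_choice (act : E → ℝ) (P Q : HProc IN IT E) (σ : HState IN IT) (a : E)
    (C : Set (HProc IN IT E × HState IN IT)) :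
    hrate act (HProc.choice P Q) σ a C = hrate act P σ a C + hrate act Q σ a C := by
  simp [hrate, hnext, Multiset.filter_add, mul_add]

lemma hrate_union (act : E → ℝ) (P : HProc IN IT E) (σ : HState IN IT) (a : E)
    {C₁ C₂ : Set (HProc IN IT E × HState IN IT)}
    (hdisj : ∀ d, d ∈ C₁ → d ∉ C₂) :
    hrate act P σ a (C₁ ∪ C₂) = hrate act P σ a C₁ + hrate act P σ a C₂ := by
  unfold hrate
  have h := Multiset.filter_add_filter
      (p := fun t : E × HProc IN IT E × HState IN IT => t.1 = a ∧ (t.2.1, t.2.2) ∈ C₁)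
      (fun t : E × HProc IN IT E × HState IN IT => t.1 = a ∧ (t.2.1, t.2.2) ∈ C₂)
      (hnext P σ)
  have h0 : (Multiset.filter
      (fun t : E × HProc IN IT E × HState IN IT =>
        (t.1 = a ∧ (t.2.1, t.2.2) ∈ C₁) ∧ (t.1 = a ∧ (t.2.1, t.2.2) ∈ C₂))
      (hnext P σ)) = 0 := by
    rw [Multiset.filter_eq_nil]
    rintro t _ ⟨⟨_, h1⟩, ⟨_, h2⟩⟩
    exact hdisj _ h1 h2
  rw [h0, add_zero] at h
  rw [← mul_add, ← Nat.cast_add, ← Multiset.card_add, h]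
  simp only [Set.mem_union, and_or_left]

/-- The conditions required of a stochastic system bisimulation for a pair of
configurations and a class `C`. -/
def Conds (Es : Set E) (act : E → ℝ) (X : HProc IN IT E) (σ : HState IN IT)
    (Y : HProc IN IT E) (τ : HState IN IT)
    (C : Set (HProc IN IT E × HState IN IT)) : Prop :=
  ((∀ a, a ∉ Es → ∀ c', HTrans (X, σ) a c' → c' ∈ C → ∃ d' ∈ C, HTrans (Y, τ) a d') ∧
   (∀ a, a ∉ Es → ∀ d', HTrans (Y, τ) a d' → d' ∈ C → ∃ c' ∈ C, HTrans (X, σ) a c')) ∧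
  (∀ a ∈ Es, hrate act X σ a C = hrate act Y τ a C)

lemma Conds.trans {Es : Set E} {act : E → ℝ} {X Y Z : HProc IN IT E}
    {σ τ υ : HState IN IT} {C : Set (HProc IN IT E × HState IN IT)}
    (h₁ : Conds Es act X σ Y τ C) (h₂ : Conds Es act Y τ Z υ C) :
    Conds Es act X σ Z υ C := by
  refine ⟨⟨fun a ha c' hc hcC => ?_, fun a ha d' hd hdC => ?_⟩,
    fun a ha => (h₁.2 a ha).trans (h₂.2 a ha)⟩
  · obtain ⟨d', hdC, hd⟩ := h₁.1.1 a ha c' hc hcC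
    exact h₂.1.1 a ha d' hd hdC
  · obtain ⟨c', hcC, hc⟩ := h₂.1.2 a ha d' hd hdC
    exact h₁.1.2 a ha c' hc hcC

lemma Conds.union {Es : Set E} {act : E → ℝ} {X Y : HProc IN IT E}
    {σ τ : HState IN IT} {C₁ C₂ : Set (HProc IN IT E × HState IN IT)}
    (hdisj : ∀ d, d ∈ C₁ → d ∉ C₂)
    (h₁ : Conds Es act X σ Y τ C₁) (h₂ : Conds Es act X σ Y τ C₂) :
    Conds Es act X σ Y τ (C₁ ∪ C₂) := by
  refine ⟨⟨?_, ?_⟩, fun a ha => ?_⟩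
  · intro a ha c' hc hcC
    rcases hcC with hm | hm
    · obtain ⟨d', hdC, hd⟩ := h₁.1.1 a ha c' hc hm
      exact ⟨d', Or.inl hdC, hd⟩
    · obtain ⟨d', hdC, hd⟩ := h₂.1.1 a ha c' hc hm
      exact ⟨d', Or.inr hdC, hd⟩
  · intro a ha d' hd hdC
    rcases hdC with hm | hm
    · obtain ⟨c', hcC, hc⟩ := h₁.1.2 a ha d' hd hm
      exact ⟨c', Or.inl hcC, hc⟩
    · obtain ⟨c', hcC, hc⟩ := h₂.1.2 a ha d' hd hm
      exact ⟨c', Or.inr hcC, hc⟩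
  · rw [hrate_union act X σ a hdisj, hrate_union act Y τ a hdisj,
      h₁.2 a ha, h₂.2 a ha]

lemma Conds.choice {Es : Set E} {act : E → ℝ} {X X' Y Y' : HProc IN IT E}
    {σ τ : HState IN IT} {C : Set (HProc IN IT E × HState IN IT)}
    (h₁ : Conds Es act X σ Y τ C) (h₂ : Conds Es act X' σ Y' τ C) :
    Conds Es act (HProc.choice X X') σ (HProc.choice Y Y') τ C := by
  refine ⟨⟨?_, ?_⟩, fun a ha => ?_⟩
  · intro a ha c' hc hcC
    have hc' : (a, c'.1, c'.2) ∈ hnext X σ + hnext X' σ := hc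
    rcases Multiset.mem_add.mp hc' with hm | hm
    · obtain ⟨d', hdC, hd⟩ := h₁.1.1 a ha c' hm hcC
      exact ⟨d', hdC, Multiset.mem_add.mpr (Or.inl hd)⟩
    · obtain ⟨d', hdC, hd⟩ := h₂.1.1 a ha c' hm hcC
      exact ⟨d', hdC, Multiset.mem_add.mpr (Or.inr hd)⟩
  · intro a ha d' hd hdC
    have hd' : (a, d'.1, d'.2) ∈ hnext Y τ + hnext Y' τ := hd
    rcases Multiset.mem_add.mp hd' with hm | hm
    · obtain ⟨c', hcC, hc⟩ := h₁.1.2 a ha d' hm hdC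
      exact ⟨c', hcC, Multiset.mem_add.mpr (Or.inl hc)⟩
    · obtain ⟨c', hcC, hc⟩ := h₂.1.2 a ha d' hm hdC
      exact ⟨c', hcC, Multiset.mem_add.mpr (Or.inr hc)⟩
  · rw [hrate_choice, hrate_choice, h₁.2 a ha, h₂.2 a ha]

/-- stochastic system bisimilarity with respect to `eqv` is a
congruence for choice: `P₁ ~ P₂` implies `P₁ + Q ~ P₂ + Q`; moreover the
cumulative rate function is additive over choice:
`r(⟨P+Q,σ⟩, a, C) = r(⟨P,σ⟩, a, C) + r(⟨Q,σ⟩, a, C)`. -/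
theorem stmt6 (Es : Set E) (act : E → ℝ)
    (eqv : HState IN IT → HState IN IT → Prop) (heqv : Equivalence eqv)
    (P₁ P₂ Q : HProc IN IT E)
    (h : SSBisim Es act eqv P₁ P₂) :
    SSBisim Es act eqv (HProc.choice P₁ Q) (HProc.choice P₂ Q) ∧
    (∀ (P' Q' : HProc IN IT E) (σ : HState IN IT) (a : E)
        (C : Set (HProc IN IT E × HState IN IT)),
      hrate act (HProc.choice P' Q') σ a C =
        hrate act P' σ a C + hrate act Q' σ a C) := by
  constructor
  · obtain ⟨B, ⟨hEq, hB⟩, hP⟩ := h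
    classical
    set c₁ := HProc.choice P₁ Q with hc₁def
    set c₂ := HProc.choice P₂ Q with hc₂def
    refine ⟨fun X Y => B X Y ∨ (B X c₁ ∧ B c₂ Y) ∨ (B X c₂ ∧ B c₁ Y), ⟨?_, ?_⟩,
      Or.inr (Or.inl ⟨hEq.refl c₁, hEq.refl c₂⟩)⟩
    · constructor
      · intro X
        exact Or.inl (hEq.refl X)
      · rintro X Y (hxy | ⟨h1, h2⟩ | ⟨h1, h2⟩)
        · exact Or.inl (hEq.symm hxy)
        · exact Or.inr (Or.inr ⟨hEq.symm h2, hEq.symm h1⟩)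
        · exact Or.inr (Or.inl ⟨hEq.symm h2, hEq.symm h1⟩)
      · rintro X Y Z (hxy | ⟨hx1, h2y⟩ | ⟨hx2, h1y⟩) (hyz | ⟨hy1, h2z⟩ | ⟨hy2, h1z⟩)
        · exact Or.inl (hEq.trans hxy hyz)
        · exact Or.inr (Or.inl ⟨hEq.trans hxy hy1, h2z⟩)
        · exact Or.inr (Or.inr ⟨hEq.trans hxy hy2, h1z⟩)
        · exact Or.inr (Or.inl ⟨hx1, hEq.trans h2y hyz⟩)
        · exact Or.inl (hEq.trans hx1 (hEq.trans (hEq.symm (hEq.trans h2y hy1)) h2z))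
        · exact Or.inl (hEq.trans hx1 h1z)
        · exact Or.inr (Or.inr ⟨hx2, hEq.trans h1y hyz⟩)
        · exact Or.inl (hEq.trans hx2 h2z)
        · exact Or.inl (hEq.trans hx2 (hEq.trans (hEq.symm (hEq.trans h1y hy2)) h1z))
    · -- the bisimulation conditions
      intro X Y hXY σ τ hστ C hC
      obtain ⟨c₀, hC⟩ := hC
      -- decomposition of the class `C` into `B`-classes
      have hgood :
          (∃ c : HProc IN IT E × HState IN IT,
              C = {d | B c.1 d.1 ∧ eqv c.2 d.2}) ∨
          (∃ c c' : HProc IN IT E × HState IN IT,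
              C = {d | B c.1 d.1 ∧ eqv c.2 d.2} ∪ {d | B c'.1 d.1 ∧ eqv c'.2 d.2} ∧
              ∀ d : HProc IN IT E × HState IN IT, d ∈ {d | B c.1 d.1 ∧ eqv c.2 d.2} →
                d ∉ {d | B c'.1 d.1 ∧ eqv c'.2 d.2}) := by
        by_cases h1 : B c₀.1 c₁
        · by_cases h2 : B c₀.1 c₂
          · refine Or.inl ⟨c₀, ?_⟩
            rw [hC]
            ext d
            simp only [Set.mem_setOf_eq]
            constructor
            · rintro ⟨(hb | ⟨_, hb⟩ | ⟨_, hb⟩), he⟩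
              · exact ⟨hb, he⟩
              · exact ⟨hEq.trans h2 hb, he⟩
              · exact ⟨hEq.trans h1 hb, he⟩
            · rintro ⟨hb, he⟩
              exact ⟨Or.inl hb, he⟩
          · refine Or.inr ⟨c₀, (c₂, c₀.2), ?_, ?_⟩
            · rw [hC]
              ext d
              simp only [Set.mem_union, Set.mem_setOf_eq]
              constructor
              · rintro ⟨(hb | ⟨_, hb⟩ | ⟨hb, _⟩), he⟩
                · exact Or.inl ⟨hb, he⟩
                · exact Or.inr ⟨hb, he⟩
                · exact absurd hb h2
              · rintro (⟨hb, he⟩ | ⟨hb, he⟩)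
                · exact ⟨Or.inl hb, he⟩
                · exact ⟨Or.inr (Or.inl ⟨h1, hb⟩), he⟩
            · rintro d ⟨hb, _⟩ ⟨hb', _⟩
              exact h2 (hEq.trans hb (hEq.symm hb'))
        · by_cases h2 : B c₀.1 c₂
          · refine Or.inr ⟨c₀, (c₁, c₀.2), ?_, ?_⟩
            · rw [hC]
              ext d
              simp only [Set.mem_union, Set.mem_setOf_eq]
              constructor
              · rintro ⟨(hb | ⟨hb, _⟩ | ⟨_, hb⟩), he⟩
                · exact Or.inl ⟨hb, he⟩
                · exact absurd hb h1
                · exact Or.inr ⟨hb, he⟩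
              · rintro (⟨hb, he⟩ | ⟨hb, he⟩)
                · exact ⟨Or.inl hb, he⟩
                · exact ⟨Or.inr (Or.inr ⟨h2, hb⟩), he⟩
            · rintro d ⟨hb, _⟩ ⟨hb', _⟩
              exact h1 (hEq.trans hb (hEq.symm hb'))
          · refine Or.inl ⟨c₀, ?_⟩
            rw [hC]
            ext d
            simp only [Set.mem_setOf_eq]
            constructor
            · rintro ⟨(hb | ⟨hb, _⟩ | ⟨hb, _⟩), he⟩
              · exact ⟨hb, he⟩
              · exact absurd hb h1
              · exact absurd hb h2
            · rintro ⟨hb, he⟩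
              exact ⟨Or.inl hb, he⟩
      -- `B`-related pairs satisfy the conditions for such classes
      have key : ∀ X' Y', B X' Y' → ∀ σ' τ', eqv σ' τ' → Conds Es act X' σ' Y' τ' C := by
        intro X' Y' hB' σ' τ' he
        rcases hgood with ⟨c, hc⟩ | ⟨c, c', hc, hdisj⟩
        · subst hc
          exact hB X' Y' hB' σ' τ' he _ ⟨c, rfl⟩
        · subst hc
          exact Conds.union hdisj
            (hB X' Y' hB' σ' τ' he _ ⟨c, rfl⟩)
            (hB X' Y' hB' σ' τ' he _ ⟨c', rfl⟩)
      -- the core pair `c₁, c₂`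
      have core : ∀ σ' τ', eqv σ' τ' → Conds Es act c₁ σ' c₂ τ' C := by
        intro σ' τ' he
        exact Conds.choice (key P₁ P₂ hP σ' τ' he) (key Q Q (hEq.refl Q) σ' τ' he)
      have core' : ∀ σ' τ', eqv σ' τ' → Conds Es act c₂ σ' c₁ τ' C := by
        intro σ' τ' he
        exact Conds.choice (key P₂ P₁ (hEq.symm hP) σ' τ' he)
          (key Q Q (hEq.refl Q) σ' τ' he)
      rcases hXY with hxy | ⟨hx1, h2y⟩ | ⟨hx2, h1y⟩
      · exact key X Y hxy σ τ hστ
      · exact ((key X c₁ hx1 σ σ (heqv.refl σ)).trans (core σ τ hστ)).trans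
          (key c₂ Y h2y τ τ (heqv.refl τ))
      · exact ((key X c₂ hx2 σ σ (heqv.refl σ)).trans (core' σ τ hστ)).trans
          (key c₁ Y h1y τ τ (heqv.refl τ))
  · intro P' Q' σ a C
    exact hrate_choice act P' Q' σ a C
end
end

section
/- Let ≡ be an equivalence on states preserved by updates and preserved by Γ (σᵢ ≡ τᵢ for i=1,2,3 implies Γ(σ₁,σ₂,σ₃) ≡ Γ(τ₁,τ₂,τ₃)). Then stochastic system bisimilarity with respect to ≡ is a congruence for cooperation: P₁ ~_s^≡ P₂ implies P₁ ⋈_L Q ~_s^≡ P₂ ⋈_L Q for every process Q and synchronisation set L. -/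
open Classical

noncomputable section

variable {IN IT E : Type}

section Stmt7Aux

variable {Es : Set E} {act : E → ℝ} {eqv : HState IN IT → HState IN IT → Prop}
  {B : HProc IN IT E → HProc IN IT E → Prop}

lemma filter_bind' {α β : Type*} (p : β → Prop) [DecidablePred p]
    (s : Multiset α) (f : α → Multiset β) :
    (s.bind f).filter p = s.bind (fun a => (f a).filter p) := by
  induction s using Multiset.induction_on with
  | empty => simp
  | cons a s ih => simp [Multiset.cons_bind, Multiset.filter_add, ih]

lemma card_filter_eq_sum {α : Type*} (p : α → Prop) [DecidablePred p] (M : Multiset α) :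
    Multiset.card (M.filter p) = (M.map (fun x => if p x then (1:ℕ) else 0)).sum := by
  induction M using Multiset.induction_on with
  | empty => simp
  | cons a s ih => by_cases h : p a <;> simp [Multiset.filter_cons, h, ih, Nat.add_comm]

lemma sum_map_expand {α : Type*} (f : α → ℕ) (s : Multiset α) (x : α) (hx : x ∈ s) :
    (s.map f).sum = f x + ((s.erase x).map f).sum := by
  conv_lhs => rw [← Multiset.cons_erase hx]
  rw [Multiset.map_cons, Multiset.sum_cons]

lemma sum_map_eq_of_classes {α : Type*} (r : α → α → Prop)
    (hre : ∀ x, r x x) (hsy : ∀ {x y}, r x y → r y x)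
    (htr : ∀ {x y z}, r x y → r y z → r x z)
    (f : α → ℕ) (hf : ∀ {x y}, r x y → f x = f y) :
    ∀ (n : ℕ) (M N : Multiset α), Multiset.card M = n →
      (∀ x, f x ≠ 0 → Multiset.card (M.filter (fun y => r x y))
          = Multiset.card (N.filter (fun y => r x y))) →
      (M.map f).sum = (N.map f).sum := by
  intro n
  induction n with
  | zero =>
      intro M N hM hcount
      rw [Multiset.card_eq_zero] at hM
      subst hM
      rw [Multiset.map_zero, Multiset.sum_zero]
      symm
      apply Multiset.sum_eq_zero
      intro b hb
      rcases Multiset.mem_map.1 hb with ⟨y, hy, rfl⟩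
      by_contra hb0
      have h1 := hcount y hb0
      simp only [Multiset.filter_zero, Multiset.card_zero] at h1
      have hy' : y ∈ N.filter (fun z => r y z) := Multiset.mem_filter.2 ⟨hy, hre y⟩
      have hne : N.filter (fun z => r y z) ≠ 0 := fun h0 => by simp [h0] at hy'
      have hpos : 0 < Multiset.card (N.filter (fun z => r y z)) := Multiset.card_pos.2 hne
      omega
  | succ k ih =>
      intro M N hM hcount
      have hMne : M ≠ 0 := by
        intro h0; rw [h0] at hM; simp at hM
      rcases Multiset.exists_mem_of_ne_zero hMne with ⟨m, hm⟩
      have hMeq : m ::ₘ M.erase m = M := Multiset.cons_erase hm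
      have hcard : Multiset.card (M.erase m) = k := by
        have := congrArg Multiset.card hMeq
        rw [Multiset.card_cons] at this
        omega
      by_cases hfm : f m = 0
      · rw [sum_map_expand f M m hm, hfm, zero_add]
        apply ih (M.erase m) N hcard
        intro x hx
        have hnr : ¬ r x m := fun hr => hx ((hf hr).trans hfm)
        have h2 := hcount x hx
        rw [← hMeq, Multiset.filter_cons, if_neg hnr, zero_add] at h2
        exact h2
      · have h1 := hcount m hfm
        have hmem : m ∈ M.filter (fun y => r m y) := Multiset.mem_filter.2 ⟨hm, hre m⟩
        have hne : N.filter (fun y => r m y) ≠ 0 := by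
          intro h0
          rw [h0] at h1
          simp only [Multiset.card_zero] at h1
          have : M.filter (fun y => r m y) ≠ 0 := fun h0' => by simp [h0'] at hmem
          exact absurd h1 (by have := Multiset.card_pos.2 this; omega)
        rcases Multiset.exists_mem_of_ne_zero hne with ⟨p, hp⟩
        have hpN : p ∈ N := (Multiset.mem_filter.1 hp).1
        have hrmp : r m p := (Multiset.mem_filter.1 hp).2
        have hNeq : p ::ₘ N.erase p = N := Multiset.cons_erase hpN
        have key : ((M.erase m).map f).sum = ((N.erase p).map f).sum := by
          apply ih _ _ hcard
          intro x hx
          have h2 := hcount x hx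
          rw [← hMeq, Multiset.filter_cons] at h2
          conv_rhs at h2 => rw [← hNeq, Multiset.filter_cons]
          by_cases hrx : r x m
          · have hrxp : r x p := htr hrx hrmp
            rw [if_pos hrx, if_pos hrxp] at h2
            simpa using h2
          · have hrxp : ¬ r x p := fun hc => hrx (htr hc (hsy hrmp))
            rw [if_neg hrx, if_neg hrxp] at h2
            simpa using h2
        rw [sum_map_expand f M m hm, sum_map_expand f N p hpN, hf hrmp, key]

/-- Lifting of a process relation through cooperation contexts. -/
def BLift (B : HProc IN IT E → HProc IN IT E → Prop) (X Y : HProc IN IT E) : Prop :=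
  X = Y ∨ ∃ L S T U V, B S T ∧ B U V ∧ X = HProc.coop L S U ∧ Y = HProc.coop L T V

lemma blift_equiv (hB : Equivalence B) : Equivalence (BLift B) := by
  constructor
  · intro X; exact Or.inl rfl
  · rintro X Y (rfl | ⟨L, S, T, U, V, h1, h2, rfl, rfl⟩)
    · exact Or.inl rfl
    · exact Or.inr ⟨L, T, S, V, U, hB.symm h1, hB.symm h2, rfl, rfl⟩
  · rintro X Y Z (rfl | ⟨L, S, T, U, V, h1, h2, rfl, rfl⟩) h
    · exact h
    · rcases h with rfl | ⟨L', S', T', U', V', h1', h2', heq, rfl⟩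
      · exact Or.inr ⟨L, S, T, U, V, h1, h2, rfl, rfl⟩
      · obtain ⟨rfl, rfl, rfl⟩ := HProc.coop.inj heq
        exact Or.inr ⟨L, S, T', U, V', hB.trans h1 h1', hB.trans h2 h2', rfl, rfl⟩

lemma mem_hnext_coop {L : Set E} {P Q : HProc IN IT E} {σ : HState IN IT}
    {a : E} {X : HProc IN IT E} {s : HState IN IT} :
    (a, X, s) ∈ hnext (HProc.coop L P Q) σ ↔
      (∃ P', a ∉ L ∧ (a, P', s) ∈ hnext P σ ∧ X = HProc.coop L P' Q) ∨
      (∃ Q', a ∉ L ∧ (a, Q', s) ∈ hnext Q σ ∧ X = HProc.coop L P Q') ∨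
      (∃ P' Q' s₁ s₂, a ∈ L ∧ (a, P', s₁) ∈ hnext P σ ∧ (a, Q', s₂) ∈ hnext Q σ ∧
        GammaDef σ s₁ s₂ ∧ X = HProc.coop L P' Q' ∧ s = Gamma σ s₁ s₂) := by
  constructor
  · intro hx
    simp only [hnext] at hx
    rcases Multiset.mem_add.1 hx with hx | hx
    · rcases Multiset.mem_add.1 hx with hx | hx
      · left
        rcases Multiset.mem_map.1 hx with ⟨t, ht, heq⟩
        obtain ⟨ta, tP, ts⟩ := t
        obtain ⟨ht1, ht2⟩ := Multiset.mem_filter.1 ht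
        simp only [Prod.mk.injEq] at heq
        obtain ⟨rfl, rfl, rfl⟩ := heq
        exact ⟨tP, ht2, ht1, rfl⟩
      · right; left
        rcases Multiset.mem_map.1 hx with ⟨t, ht, heq⟩
        obtain ⟨ta, tP, ts⟩ := t
        obtain ⟨ht1, ht2⟩ := Multiset.mem_filter.1 ht
        simp only [Prod.mk.injEq] at heq
        obtain ⟨rfl, rfl, rfl⟩ := heq
        exact ⟨tP, ht2, ht1, rfl⟩
    · right; right
      rcases Multiset.mem_bind.1 hx with ⟨t, ht, hmap⟩
      rcases Multiset.mem_map.1 hmap with ⟨u, hu, heq⟩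
      obtain ⟨ta, tP, ts⟩ := t
      obtain ⟨ua, uP, us⟩ := u
      obtain ⟨hu1, hu2⟩ := Multiset.mem_filter.1 hu
      simp only [Prod.mk.injEq] at heq
      obtain ⟨rfl, rfl, rfl⟩ := heq
      obtain ⟨hua, hL, hG⟩ := hu2
      subst hua
      exact ⟨tP, uP, ts, us, hL, ht, hu1, hG, rfl, rfl⟩
  · rintro (⟨P', hnL, hm, rfl⟩ | ⟨Q', hnL, hm, rfl⟩ |
      ⟨P', Q', s₁, s₂, hL, hm1, hm2, hG, rfl, rfl⟩)
    · simp only [hnext]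
      refine Multiset.mem_add.2 (Or.inl (Multiset.mem_add.2 (Or.inl ?_)))
      exact Multiset.mem_map.2 ⟨(a, P', s), Multiset.mem_filter.2 ⟨hm, hnL⟩, rfl⟩
    · simp only [hnext]
      refine Multiset.mem_add.2 (Or.inl (Multiset.mem_add.2 (Or.inr ?_)))
      exact Multiset.mem_map.2 ⟨(a, Q', s), Multiset.mem_filter.2 ⟨hm, hnL⟩, rfl⟩
    · simp only [hnext]
      refine Multiset.mem_add.2 (Or.inr ?_)
      refine Multiset.mem_bind.2 ⟨(a, P', s₁), hm1, ?_⟩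
      exact Multiset.mem_map.2 ⟨(a, Q', s₂),
        Multiset.mem_filter.2 ⟨hm2, rfl, hL, hG⟩, rfl⟩

/-- If some event is instantaneous or has nonzero rate, then the existence of a
stochastic system bisimulation forces `eqv` to be the identity. -/
lemma collapse (heqv : Equivalence eqv)
    (hB : IsSSB Es act eqv B) (a₀ : E) (ha₀ : a₀ ∉ Es ∨ act a₀ ≠ 0) :
    ∀ σ τ : HState IN IT, eqv σ τ → σ = τ := by
  intro σ τ hστ
  funext ι
  set v : ℝ × IT := σ ι with hv
  set P0 : HProc IN IT E := .iprefix a₀ ι v.1 v.2 .nil with hP0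
  set R : HProc IN IT E := .coop Set.univ P0 P0 with hR
  have hupdσ : Function.update σ ι v = σ := by
    rw [hv]; exact Function.update_eq_self ι σ
  have hmemP0 : ∀ ρ : HState IN IT,
      (a₀, (HProc.nil : HProc IN IT E), Function.update ρ ι v) ∈ hnext P0 ρ := by
    intro ρ; rw [hP0]; simp [hnext]
  have htrans : (a₀, HProc.coop Set.univ (.nil) (.nil), Gamma σ σ σ) ∈ hnext R σ := by
    have := (mem_hnext_coop (L := Set.univ) (P := P0) (Q := P0) (σ := σ)).2
      (Or.inr (Or.inr ⟨.nil, .nil, σ, σ, Set.mem_univ a₀, ?_, ?_, ?_, rfl, rfl⟩))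
    · exact this
    · have := hmemP0 σ; rwa [hupdσ] at this
    · have := hmemP0 σ; rwa [hupdσ] at this
    · intro κ; exact Or.inl rfl
  have hback : ∀ x : E × HProc IN IT E × HState IN IT, x ∈ hnext R τ → v = τ ι := by
    intro x hx
    obtain ⟨xa, xP, xs⟩ := x
    rcases mem_hnext_coop.1 hx with ⟨P', hnL, _, _⟩ | ⟨Q', hnL, _, _⟩ |
      ⟨P', Q', s₁, s₂, _, hm1, hm2, hG, _, _⟩
    · exact absurd (Set.mem_univ xa) hnL
    · exact absurd (Set.mem_univ xa) hnL
    · have h1 : s₁ ι = v := by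
        have h := hm1; rw [hP0] at h; simp [hnext] at h
        obtain ⟨-, -, h3⟩ := h
        have h4 : s₁ = Function.update τ ι v := by
          first | exact h3 | exact h3.symm
        rw [h4, Function.update_self]
      have h2 : s₂ ι = v := by
        have h := hm2; rw [hP0] at h; simp [hnext] at h
        obtain ⟨-, -, h3⟩ := h
        have h4 : s₂ = Function.update τ ι v := by
          first | exact h3 | exact h3.symm
        rw [h4, Function.update_self]
      rcases hG ι with h | h
      · rw [h2] at h; exact h.symm
      · rw [h1] at h; exact h.symm
  set c' : HProc IN IT E × HState IN IT := (HProc.coop Set.univ .nil .nil, Gamma σ σ σ)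
    with hc'
  obtain ⟨C, hCdef⟩ : ∃ C : Set (HProc IN IT E × HState IN IT),
      C = {d | B c'.1 d.1 ∧ eqv c'.2 d.2} := ⟨_, rfl⟩
  have hclass : ∃ c₀ : HProc IN IT E × HState IN IT,
      C = {d | B c₀.1 d.1 ∧ eqv c₀.2 d.2} := ⟨c', hCdef⟩
  have hc'C : c' ∈ C := by rw [hCdef]; exact ⟨hB.1.refl _, heqv.refl _⟩
  have hcond := hB.2 R R (hB.1.refl R) σ τ hστ C hclass
  by_cases hEs : a₀ ∈ Es
  · rcases ha₀ with ha | hact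
    · exact absurd hEs ha
    · have hr := hcond.2 a₀ hEs
      unfold hrate at hr
      have hmemf : (a₀, c'.1, c'.2) ∈
          (hnext R σ).filter (fun t => t.1 = a₀ ∧ (t.2.1, t.2.2) ∈ C) :=
        Multiset.mem_filter.2 ⟨htrans, rfl, hc'C⟩
      have hne : (hnext R σ).filter (fun t => t.1 = a₀ ∧ (t.2.1, t.2.2) ∈ C) ≠ 0 :=
        fun h0 => by simp [h0] at hmemf
      have hposσ : 0 < Multiset.card
          ((hnext R σ).filter (fun t => t.1 = a₀ ∧ (t.2.1, t.2.2) ∈ C)) :=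
        Multiset.card_pos.2 hne
      have hcards := mul_left_cancel₀ hact hr
      have hcards' : Multiset.card ((hnext R σ).filter (fun t => t.1 = a₀ ∧ (t.2.1, t.2.2) ∈ C))
          = Multiset.card ((hnext R τ).filter (fun t => t.1 = a₀ ∧ (t.2.1, t.2.2) ∈ C)) := by
        exact_mod_cast hcards
      have hneτ : (hnext R τ).filter (fun t => t.1 = a₀ ∧ (t.2.1, t.2.2) ∈ C) ≠ 0 := by
        intro h0
        rw [h0] at hcards'
        simp only [Multiset.card_zero] at hcards'
        omega
      rcases Multiset.exists_mem_of_ne_zero hneτ with ⟨x, hxmem⟩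
      exact (hback x (Multiset.mem_filter.1 hxmem).1)
  · obtain ⟨d', _, hd'⟩ := (hcond.1).1 a₀ hEs c' htrans hc'C
    exact (hback (a₀, d'.1, d'.2) hd')

lemma lift_step (heqv : Equivalence eqv) (hB : IsSSB Es act eqv B)
    (hcol : ∀ σ τ : HState IN IT, eqv σ τ → σ = τ)
    {X Y : HProc IN IT E} (hXY : BLift B X Y) {σ τ : HState IN IT} (hστ : eqv σ τ)
    (C : Set (HProc IN IT E × HState IN IT))
    (hC : ∃ c₀ : HProc IN IT E × HState IN IT,
      C = {d | BLift B c₀.1 d.1 ∧ eqv c₀.2 d.2})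
    {a : E} (ha : a ∉ Es) {c' : HProc IN IT E × HState IN IT}
    (htr : HTrans (X, σ) a c') (hc' : c' ∈ C) :
    ∃ d' ∈ C, HTrans (Y, τ) a d' := by
  obtain rfl : σ = τ := hcol _ _ hστ
  rcases hXY with rfl | ⟨L, S, T, U, V, hST, hUV, rfl, rfl⟩
  · exact ⟨c', hc', htr⟩
  obtain ⟨c₀, rfl⟩ := hC
  obtain ⟨hcB, hceqv⟩ := hc'
  obtain ⟨cP, cs⟩ := c'
  rcases mem_hnext_coop.1 htr with ⟨P', hnL, hmem, rfl⟩ | ⟨Q', hnL, hmem, rfl⟩ |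
    ⟨P', Q', s₁, s₂, hL, hm1, hm2, hG, rfl, rfl⟩
  · obtain ⟨d₁, hd₁C, hd₁t⟩ :=
      ((hB.2 S T hST σ σ (heqv.refl σ) {d | B P' d.1 ∧ eqv cs d.2}
        ⟨(P', cs), rfl⟩).1).1 a ha (P', cs) hmem ⟨hB.1.refl _, heqv.refl _⟩
    obtain ⟨hBP', heqs⟩ := hd₁C
    refine ⟨(HProc.coop L d₁.1 V, d₁.2), ⟨?_, ?_⟩, ?_⟩
    · exact (blift_equiv hB.1).trans hcB
        (Or.inr ⟨L, P', d₁.1, U, V, hBP', hUV, rfl, rfl⟩)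
    · exact heqv.trans hceqv heqs
    · exact mem_hnext_coop.2 (Or.inl ⟨d₁.1, hnL, hd₁t, rfl⟩)
  · obtain ⟨d₁, hd₁C, hd₁t⟩ :=
      ((hB.2 U V hUV σ σ (heqv.refl σ) {d | B Q' d.1 ∧ eqv cs d.2}
        ⟨(Q', cs), rfl⟩).1).1 a ha (Q', cs) hmem ⟨hB.1.refl _, heqv.refl _⟩
    obtain ⟨hBQ', heqs⟩ := hd₁C
    refine ⟨(HProc.coop L T d₁.1, d₁.2), ⟨?_, ?_⟩, ?_⟩
    · exact (blift_equiv hB.1).trans hcB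
        (Or.inr ⟨L, S, T, Q', d₁.1, hST, hBQ', rfl, rfl⟩)
    · exact heqv.trans hceqv heqs
    · exact mem_hnext_coop.2 (Or.inr (Or.inl ⟨d₁.1, hnL, hd₁t, rfl⟩))
  · obtain ⟨d₁, hd₁C, hd₁t⟩ :=
      ((hB.2 S T hST σ σ (heqv.refl σ) {d | B P' d.1 ∧ eqv s₁ d.2}
        ⟨(P', s₁), rfl⟩).1).1 a ha (P', s₁) hm1 ⟨hB.1.refl _, heqv.refl _⟩
    obtain ⟨hBP', heq1⟩ := hd₁C
    obtain ⟨d₂, hd₂C, hd₂t⟩ :=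
      ((hB.2 U V hUV σ σ (heqv.refl σ) {d | B Q' d.1 ∧ eqv s₂ d.2}
        ⟨(Q', s₂), rfl⟩).1).1 a ha (Q', s₂) hm2 ⟨hB.1.refl _, heqv.refl _⟩
    obtain ⟨hBQ', heq2⟩ := hd₂C
    obtain hseq1 : s₁ = d₁.2 := hcol _ _ heq1
    obtain hseq2 : s₂ = d₂.2 := hcol _ _ heq2
    refine ⟨(HProc.coop L d₁.1 d₂.1, Gamma σ s₁ s₂), ⟨?_, hceqv⟩, ?_⟩
    · exact (blift_equiv hB.1).trans hcB
        (Or.inr ⟨L, P', d₁.1, Q', d₂.1, hBP', hBQ', rfl, rfl⟩)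
    · refine mem_hnext_coop.2 (Or.inr (Or.inr
        ⟨d₁.1, d₂.1, s₁, s₂, hL, ?_, ?_, hG, rfl, rfl⟩))
      · have := hd₁t; rw [hseq1]; exact this
      · have := hd₂t; rw [hseq2]; exact this

/-- Relation on transition triples: same label, `B`-related derivatives, equal states. -/
def TripRel (B : HProc IN IT E → HProc IN IT E → Prop)
    (x y : E × HProc IN IT E × HState IN IT) : Prop :=
  x.1 = y.1 ∧ B x.2.1 y.2.1 ∧ x.2.2 = y.2.2

lemma lift_rate (heqv : Equivalence eqv) (hB : IsSSB Es act eqv B)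
    (hcol : ∀ σ τ : HState IN IT, eqv σ τ → σ = τ)
    {L : Set E} {S T U V : HProc IN IT E} (hST : B S T) (hUV : B U V)
    (σ : HState IN IT) (C : Set (HProc IN IT E × HState IN IT))
    (hC : ∃ c₀ : HProc IN IT E × HState IN IT,
      C = {d | BLift B c₀.1 d.1 ∧ eqv c₀.2 d.2})
    {a : E} (haEs : a ∈ Es) :
    hrate act (HProc.coop L S U) σ a C = hrate act (HProc.coop L T V) σ a C := by
  by_cases hact : act a = 0
  · unfold hrate; rw [hact]; ring
  obtain ⟨c₀, hCdef⟩ := hC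
  have hE := blift_equiv hB.1
  have hsat : ∀ (x y : HProc IN IT E) (s : HState IN IT), BLift B x y →
      ((x, s) ∈ C ↔ (y, s) ∈ C) := by
    intro x y s hxy
    rw [hCdef]
    simp only [Set.mem_setOf_eq]
    constructor
    · rintro ⟨h1, h2⟩; exact ⟨hE.trans h1 hxy, h2⟩
    · rintro ⟨h1, h2⟩; exact ⟨hE.trans h1 (hE.symm hxy), h2⟩
  have hre : ∀ x, TripRel B x x := fun x => ⟨rfl, hB.1.refl _, rfl⟩
  have hsy : ∀ {x y}, TripRel B x y → TripRel B y x :=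
    fun h => ⟨h.1.symm, hB.1.symm h.2.1, h.2.2.symm⟩
  have htr : ∀ {x y z}, TripRel B x y → TripRel B y z → TripRel B x z :=
    fun h h' => ⟨h.1.trans h'.1, hB.1.trans h.2.1 h'.2.1, h.2.2.trans h'.2.2⟩
  have hcount : ∀ (P Q' : HProc IN IT E), B P Q' →
      ∀ x : E × HProc IN IT E × HState IN IT, x.1 = a →
      Multiset.card ((hnext P σ).filter (fun y => TripRel B x y)) =
      Multiset.card ((hnext Q' σ).filter (fun y => TripRel B x y)) := by
    intro P Q' hPQ x hx1
    obtain ⟨D, hDdef⟩ : ∃ D : Set (HProc IN IT E × HState IN IT),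
        D = {d | B x.2.1 d.1 ∧ eqv x.2.2 d.2} := ⟨_, rfl⟩
    have hr := (hB.2 P Q' hPQ σ σ (heqv.refl σ) D ⟨(x.2.1, x.2.2), hDdef⟩).2 a haEs
    unfold hrate at hr
    have hcast := mul_left_cancel₀ hact hr
    have hcards : Multiset.card ((hnext P σ).filter
          (fun t => t.1 = a ∧ (t.2.1, t.2.2) ∈ D)) =
        Multiset.card ((hnext Q' σ).filter
          (fun t => t.1 = a ∧ (t.2.1, t.2.2) ∈ D)) := by exact_mod_cast hcast
    have hiff : ∀ t : E × HProc IN IT E × HState IN IT,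
        (t.1 = a ∧ (t.2.1, t.2.2) ∈ D) ↔ TripRel B x t := by
      intro t
      rw [hDdef]
      simp only [Set.mem_setOf_eq]
      constructor
      · rintro ⟨h1, h2, h3⟩
        exact ⟨hx1.trans h1.symm, h2, hcol _ _ h3⟩
      · rintro ⟨h1, h2, h3⟩
        exact ⟨h1.symm.trans hx1, h2, h3 ▸ heqv.refl _⟩
    rw [Multiset.filter_congr (fun t _ => hiff t)] at hcards
    conv_rhs at hcards => rw [Multiset.filter_congr (fun t _ => hiff t)]
    exact hcards
  unfold hrate
  have hkey : Multiset.card ((hnext (HProc.coop L S U) σ).filter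
        (fun t => t.1 = a ∧ (t.2.1, t.2.2) ∈ C)) =
      Multiset.card ((hnext (HProc.coop L T V) σ).filter
        (fun t => t.1 = a ∧ (t.2.1, t.2.2) ∈ C)) := by
    simp only [hnext]
    rw [Multiset.filter_add, Multiset.filter_add, Multiset.filter_add,
      Multiset.filter_add, Multiset.card_add, Multiset.card_add,
      Multiset.card_add, Multiset.card_add]
    have hpart1 : Multiset.card (Multiset.filter
          (fun t => t.1 = a ∧ (t.2.1, t.2.2) ∈ C)
          (((hnext S σ).filter (fun t => t.1 ∉ L)).map
            (fun t => (t.1, HProc.coop L t.2.1 U, t.2.2)))) =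
        Multiset.card (Multiset.filter
          (fun t => t.1 = a ∧ (t.2.1, t.2.2) ∈ C)
          (((hnext T σ).filter (fun t => t.1 ∉ L)).map
            (fun t => (t.1, HProc.coop L t.2.1 V, t.2.2)))) := by
      rw [Multiset.filter_map, Multiset.filter_map, Multiset.card_map,
        Multiset.card_map, Multiset.filter_filter, Multiset.filter_filter,
        card_filter_eq_sum, card_filter_eq_sum]
      refine Eq.trans (sum_map_eq_of_classes (TripRel B) hre @hsy @htr _ ?_
        (Multiset.card (hnext S σ)) (hnext S σ) (hnext T σ) rfl ?_)
        (congrArg Multiset.sum (Multiset.map_congr rfl ?_))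
      · intro x y hxy
        obtain ⟨h1, h2, h3⟩ := hxy
        have hCiff := hsat (HProc.coop L x.2.1 U) (HProc.coop L y.2.1 U) y.2.2
          (Or.inr ⟨L, x.2.1, y.2.1, U, U, h2, hB.1.refl U, rfl, rfl⟩)
        refine if_congr ?_ rfl rfl
        simp only [Function.comp_apply]
        rw [h1, h3]
        tauto
      · intro x hx
        have hcond := (ite_ne_right_iff.mp hx).1
        simp only [Function.comp_apply] at hcond
        exact hcount S T hST x hcond.1.1
      · intro t _
        have hCiff := hsat (HProc.coop L t.2.1 U) (HProc.coop L t.2.1 V) t.2.2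
          (Or.inr ⟨L, t.2.1, t.2.1, U, V, hB.1.refl _, hUV, rfl, rfl⟩)
        refine if_congr ?_ rfl rfl
        simp only [Function.comp_apply]
        tauto
    have hpart2 : Multiset.card (Multiset.filter
          (fun t => t.1 = a ∧ (t.2.1, t.2.2) ∈ C)
          (((hnext U σ).filter (fun t => t.1 ∉ L)).map
            (fun t => (t.1, HProc.coop L S t.2.1, t.2.2)))) =
        Multiset.card (Multiset.filter
          (fun t => t.1 = a ∧ (t.2.1, t.2.2) ∈ C)
          (((hnext V σ).filter (fun t => t.1 ∉ L)).map
            (fun t => (t.1, HProc.coop L T t.2.1, t.2.2)))) := by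
      rw [Multiset.filter_map, Multiset.filter_map, Multiset.card_map,
        Multiset.card_map, Multiset.filter_filter, Multiset.filter_filter,
        card_filter_eq_sum, card_filter_eq_sum]
      refine Eq.trans (sum_map_eq_of_classes (TripRel B) hre @hsy @htr _ ?_
        (Multiset.card (hnext U σ)) (hnext U σ) (hnext V σ) rfl ?_)
        (congrArg Multiset.sum (Multiset.map_congr rfl ?_))
      · intro x y hxy
        obtain ⟨h1, h2, h3⟩ := hxy
        have hCiff := hsat (HProc.coop L S x.2.1) (HProc.coop L S y.2.1) y.2.2
          (Or.inr ⟨L, S, S, x.2.1, y.2.1, hB.1.refl S, h2, rfl, rfl⟩)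
        refine if_congr ?_ rfl rfl
        simp only [Function.comp_apply]
        rw [h1, h3]
        tauto
      · intro x hx
        have hcond := (ite_ne_right_iff.mp hx).1
        simp only [Function.comp_apply] at hcond
        exact hcount U V hUV x hcond.1.1
      · intro t _
        have hCiff := hsat (HProc.coop L S t.2.1) (HProc.coop L T t.2.1) t.2.2
          (Or.inr ⟨L, S, T, t.2.1, t.2.1, hST, hB.1.refl _, rfl, rfl⟩)
        refine if_congr ?_ rfl rfl
        simp only [Function.comp_apply]
        tauto
    have hpart3 : Multiset.card (Multiset.filter
          (fun t => t.1 = a ∧ (t.2.1, t.2.2) ∈ C)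
          ((hnext S σ).bind (fun t =>
            (((hnext U σ).filter
                (fun u => u.1 = t.1 ∧ t.1 ∈ L ∧ GammaDef σ t.2.2 u.2.2)).map
              (fun u => (t.1, HProc.coop L t.2.1 u.2.1, Gamma σ t.2.2 u.2.2)))))) =
        Multiset.card (Multiset.filter
          (fun t => t.1 = a ∧ (t.2.1, t.2.2) ∈ C)
          ((hnext T σ).bind (fun t =>
            (((hnext V σ).filter
                (fun u => u.1 = t.1 ∧ t.1 ∈ L ∧ GammaDef σ t.2.2 u.2.2)).map
              (fun u => (t.1, HProc.coop L t.2.1 u.2.1, Gamma σ t.2.2 u.2.2)))))) := by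
      rw [filter_bind', filter_bind', Multiset.card_bind, Multiset.card_bind]
      -- inner step : replace U by V for every fixed t
      have hinner : ∀ t : E × HProc IN IT E × HState IN IT,
          Multiset.card (Multiset.filter (fun x => x.1 = a ∧ (x.2.1, x.2.2) ∈ C)
            (((hnext U σ).filter
                (fun u => u.1 = t.1 ∧ t.1 ∈ L ∧ GammaDef σ t.2.2 u.2.2)).map
              (fun u => (t.1, HProc.coop L t.2.1 u.2.1, Gamma σ t.2.2 u.2.2)))) =
          Multiset.card (Multiset.filter (fun x => x.1 = a ∧ (x.2.1, x.2.2) ∈ C)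
            (((hnext V σ).filter
                (fun u => u.1 = t.1 ∧ t.1 ∈ L ∧ GammaDef σ t.2.2 u.2.2)).map
              (fun u => (t.1, HProc.coop L t.2.1 u.2.1, Gamma σ t.2.2 u.2.2)))) := by
        intro t
        rw [Multiset.filter_map, Multiset.filter_map, Multiset.card_map,
          Multiset.card_map, Multiset.filter_filter, Multiset.filter_filter,
          card_filter_eq_sum, card_filter_eq_sum]
        refine sum_map_eq_of_classes (TripRel B) hre @hsy @htr _ ?_
          (Multiset.card (hnext U σ)) (hnext U σ) (hnext V σ) rfl ?_
        · intro x y hxy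
          obtain ⟨h1, h2, h3⟩ := hxy
          have hCiff := hsat (HProc.coop L t.2.1 x.2.1) (HProc.coop L t.2.1 y.2.1)
            (Gamma σ t.2.2 y.2.2)
            (Or.inr ⟨L, t.2.1, t.2.1, x.2.1, y.2.1, hB.1.refl _, h2, rfl, rfl⟩)
          refine if_congr ?_ rfl rfl
          simp only [Function.comp_apply]
          rw [h1, h3]
          tauto
        · intro x hx
          have hcond := (ite_ne_right_iff.mp hx).1
          simp only [Function.comp_apply] at hcond
          have hxa : x.1 = a := hcond.2.1.trans hcond.1.1
          exact hcount U V hUV x hxa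
      refine Eq.trans (congrArg Multiset.sum (Multiset.map_congr rfl
          (fun t _ => ?_)))
        (sum_map_eq_of_classes (TripRel B) hre @hsy @htr _ ?_
          (Multiset.card (hnext S σ)) (hnext S σ) (hnext T σ) rfl ?_)
      · exact hinner t
      · intro x y hxy
        obtain ⟨h1, h2, h3⟩ := hxy
        simp only [Function.comp_apply]
        rw [Multiset.filter_map, Multiset.filter_map, Multiset.card_map,
          Multiset.card_map, Multiset.filter_filter, Multiset.filter_filter]
        apply congrArg
        apply Multiset.filter_congr
        intro u _
        have hCiff := hsat (HProc.coop L x.2.1 u.2.1) (HProc.coop L y.2.1 u.2.1)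
          (Gamma σ y.2.2 u.2.2)
          (Or.inr ⟨L, x.2.1, y.2.1, u.2.1, u.2.1, h2, hB.1.refl _, rfl, rfl⟩)
        simp only [Function.comp_apply]
        rw [h1, h3]
        tauto
      · intro x hx
        have hxa : x.1 = a := by
          by_contra hxa
          apply hx
          simp only [Function.comp_apply]
          rw [Multiset.card_eq_zero, Multiset.filter_eq_nil]
          intro z hzmem hphi
          obtain ⟨u, hu, rfl⟩ := Multiset.mem_map.1 hzmem
          exact hxa hphi.1
        exact hcount S T hST x hxa
    rw [hpart1, hpart2, hpart3]
  rw [hkey]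

end Stmt7Aux

/-- if the equivalence `eqv` over states is preserved by updates
and by `Γ`, then stochastic system bisimilarity with respect to `eqv` is a
congruence for cooperation: `P₁ ~ P₂` implies `P₁ ⋈_L Q ~ P₂ ⋈_L Q` for every
process `Q` and synchronisation set `L`. -/
theorem stmt7 (Es : Set E) (act : E → ℝ)
    (eqv : HState IN IT → HState IN IT → Prop) (heqv : Equivalence eqv)
    (hupd : ∀ (σ τ : HState IN IT) (ι : IN) (r : ℝ) (I : IT),
      eqv σ τ → eqv (Function.update σ ι (r, I)) (Function.update τ ι (r, I)))
    (hGamma : ∀ σ₁ σ₂ σ₃ τ₁ τ₂ τ₃ : HState IN IT,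
      eqv σ₁ τ₁ → eqv σ₂ τ₂ → eqv σ₃ τ₃ →
      eqv (Gamma σ₁ σ₂ σ₃) (Gamma τ₁ τ₂ τ₃))
    (P₁ P₂ : HProc IN IT E)
    (h : SSBisim Es act eqv P₁ P₂) :
    ∀ (Q : HProc IN IT E) (L : Set E),
      SSBisim Es act eqv (HProc.coop L P₁ Q) (HProc.coop L P₂ Q) := by
  
  intro Q L
  obtain ⟨B, hB, hP12⟩ := h
  by_cases hdeg : ∀ b : E, b ∈ Es ∧ act b = 0
  · refine ⟨fun _ _ => True,
      ⟨⟨fun _ => trivial, fun _ => trivial, fun _ _ => trivial⟩, ?_⟩, trivial⟩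
    intro P Q' _ σ τ _ C _
    refine ⟨⟨?_, ?_⟩, ?_⟩
    · intro b hb
      exact (hb (hdeg b).1).elim
    · intro b hb
      exact (hb (hdeg b).1).elim
    · intro b _
      unfold hrate
      rw [(hdeg b).2]
      ring
  · push_neg at hdeg
    obtain ⟨a₀, ha₀⟩ := hdeg
    have ha₀' : a₀ ∉ Es ∨ act a₀ ≠ 0 := by
      by_cases hin : a₀ ∈ Es
      · exact Or.inr (ha₀ hin)
      · exact Or.inl hin
    have hcol := collapse heqv hB a₀ ha₀'
    refine ⟨BLift B, ⟨blift_equiv hB.1, ?_⟩,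
      Or.inr ⟨L, P₁, P₂, Q, Q, hP12, hB.1.refl Q, rfl, rfl⟩⟩
    intro X Y hXY σ τ hστ C hC
    refine ⟨⟨?_, ?_⟩, ?_⟩
    · intro b hb c' htr hc'
      exact lift_step heqv hB hcol hXY hστ C hC hb htr hc'
    · intro b hb d' htr hd'
      exact lift_step heqv hB hcol ((blift_equiv hB.1).symm hXY)
        (heqv.symm hστ) C hC hb htr hd'
    · intro b hbEs
      obtain rfl : σ = τ := hcol _ _ hστ
      rcases hXY with rfl | ⟨L', S, T, U, V, hST, hUV, rfl, rfl⟩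
      · rfl
      · exact lift_rate heqv hB hcol hST hUV σ C hC hbEs
end
end

section
/- If two states σ₁ ≐ σ₂ (i.e., for every variable V and function f, the summed strengths sum(σ₁,V,f) = sum(σ₂,V,f)), then the induced ODE systems coincide: for every variable V, Σ{ r·⟦I(𝒱)⟧ | iv(ι)=V, σ₁(ι)=(r,I(𝒱)) } = Σ{ r·⟦I(𝒱)⟧ | iv(ι)=V, σ₂(ι)=(r,I(𝒱)) } as functions of the variables. -/
open Classical

noncomputable section

/-- `sum(σ, V, f)`: the sum of strengths `r` over influence names `ι` with
`iv ι = V`, `σ ι = (r, I)` and interpretation `⟦I⟧ = f`. -/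
def ssum {IN IT Vr α : Type*} [Fintype IN] (iv : IN → Vr) (interp : IT → α → ℝ)
    (σ : IN → ℝ × IT) (V : Vr) (f : α → ℝ) : ℝ :=
  ∑ ι : IN, if iv ι = V ∧ interp (σ ι).2 = f then (σ ι).1 else 0

/-- The relation `σ ≐ τ`: for every variable `V` and function `f`,
`sum(σ,V,f) = sum(τ,V,f)`. -/
def doteq {IN IT Vr α : Type*} [Fintype IN] (iv : IN → Vr) (interp : IT → α → ℝ)
    (σ τ : IN → ℝ × IT) : Prop :=
  ∀ (V : Vr) (f : α → ℝ), ssum iv interp σ V f = ssum iv interp τ V f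


lemma group_by_fn {IN IT Vr α : Type*} [Fintype IN]
    (iv : IN → Vr) (interp : IT → α → ℝ) (σ : IN → ℝ × IT)
    (F : Finset (α → ℝ)) (hF : ∀ ι, interp (σ ι).2 ∈ F) (V : Vr) (x : α) :
    (∑ ι : IN, if iv ι = V then (σ ι).1 * interp (σ ι).2 x else 0) =
      ∑ f ∈ F, ssum iv interp σ V f * f x := by
  unfold ssum
  simp only [Finset.sum_mul]
  rw [Finset.sum_comm]
  refine Finset.sum_congr rfl fun ι _ => ?_
  rw [Finset.sum_eq_single (interp (σ ι).2)]
  · by_cases hv : iv ι = V <;> simp [hv]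
  · intro f _ hf
    simp [Ne.symm hf]
  · intro hnot; exact absurd (hF ι) hnot

/-- if `σ₁ ≐ σ₂` then the induced ODE right-hand sides coincide:
for every variable `V`, the multiset sums `Σ { r·⟦I⟧ | iv ι = V, σᵢ ι = (r,I) }`
are equal as functions of the continuous variables. -/
theorem stmt10 {IN IT Vr α : Type*} [Fintype IN]
    (iv : IN → Vr) (interp : IT → α → ℝ)
    (σ₁ σ₂ : IN → ℝ × IT) (h : doteq iv interp σ₁ σ₂) :
    ∀ (V : Vr) (x : α),
      (∑ ι : IN, if iv ι = V then (σ₁ ι).1 * interp (σ₁ ι).2 x else 0) =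
      (∑ ι : IN, if iv ι = V then (σ₂ ι).1 * interp (σ₂ ι).2 x else 0) := by
  intro V x
  classical
  set F : Finset (α → ℝ) :=
    (Finset.univ.image fun ι => interp (σ₁ ι).2) ∪
    (Finset.univ.image fun ι => interp (σ₂ ι).2) with hFdef
  have h1 : ∀ ι, interp (σ₁ ι).2 ∈ F := fun ι => by
    simp [hFdef]
  have h2 : ∀ ι, interp (σ₂ ι).2 ∈ F := fun ι => by
    simp [hFdef]
  rw [group_by_fn iv interp σ₁ F h1 V x, group_by_fn iv interp σ₂ F h2 V x]
  exact Finset.sum_congr rfl fun f _ => by rw [h V f]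
end
end

section
/- The equivalence ≐ on states (equality of summed strengths per variable and influence type interpretation) is in general not preserved by updates: there exist states σ ≐ τ, an influence ι, and (r,I) such that σ[ι ↦ (r,I)] is not ≐-equivalent to τ[ι ↦ (r,I)]. -/
open Classical

noncomputable section

/-- `≐` is in general not preserved by updates: there are states
`σ ≐ τ`, an influence `ι` and an update value `(r, I)` such that
`σ[ι ↦ (r,I)]` is not `≐`-equivalent to `τ[ι ↦ (r,I)]`. (Here with two
influences mapped to the same variable and the same constant interpretation.) -/
theorem stmt11 :
    ∃ (σ τ : Bool → ℝ × Unit) (ι : Bool) (r : ℝ) (I : Unit),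
      doteq (fun _ : Bool => ()) (fun _ : Unit => fun _ : Unit => (1 : ℝ)) σ τ ∧
      ¬ doteq (fun _ : Bool => ()) (fun _ : Unit => fun _ : Unit => (1 : ℝ))
          (Function.update σ ι (r, I)) (Function.update τ ι (r, I)) := by
  refine ⟨fun b => (if b then 1 else 2, ()), fun b => (if b then 2 else 1, ()),
    true, 0, (), ?_, ?_⟩
  · intro V f
    simp only [ssum, Fintype.sum_bool]
    by_cases h : (fun _ : Unit => (1 : ℝ)) = f <;> simp [h] <;> ring
  · intro h
    have := h () (fun _ => (1 : ℝ))
    simp [ssum, Fintype.sum_bool, Function.update] at this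
end
end

section
/- Well-behavedness is preserved by system bisimulation: if stochastic HYPE models P and Q are system bisimilar and P is well-behaved (admits only finitely many finite sequences of simultaneous instantaneous events), then Q is well-behaved. -/
variable {P S E : Type*}

/-- A system bisimulation on a labelled transition system over configurations. -/
def IsSysBisim (tr : P × S → E → P × S → Prop) (B : P → P → Prop) : Prop :=
  ∀ p q, B p q → ∀ (a : E) (σ : S),
    (∀ p' σ', tr (p, σ) a (p', σ') → ∃ q', tr (q, σ) a (q', σ') ∧ B p' q') ∧
    (∀ q' σ', tr (q, σ) a (q', σ') → ∃ p', tr (p, σ) a (p', σ') ∧ B p' q')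

/-- System bisimilarity: membership in some system bisimulation. -/
def SysBisimilar (tr : P × S → E → P × S → Prop) (p q : P) : Prop :=
  ∃ B, IsSysBisim tr B ∧ B p q

/-- `p` can execute an infinite sequence of (simultaneous) instantaneous
events, where `Ed` is the set of instantaneous events. -/
def InstDivergent (tr : P × S → E → P × S → Prop) (Ed : Set E) (p : P) : Prop :=
  ∃ (σ : S) (c : ℕ → P × S) (ev : ℕ → E),
    c 0 = (p, σ) ∧ ∀ n, ev n ∈ Ed ∧ tr (c n) (ev n) (c (n + 1))

/-- Well-behavedness: every sequence of instantaneous events is finite, i.e.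
there is no infinite sequence of instantaneous-event transitions. -/
def WellBehaved (tr : P × S → E → P × S → Prop) (Ed : Set E) (p : P) : Prop :=
  ¬ InstDivergent tr Ed p

/-- well-behavedness is preserved by system bisimulation: if `p`
and `q` are system bisimilar and `p` is well-behaved, then so is `q`. -/
theorem stmt13 (tr : P × S → E → P × S → Prop) (Ed : Set E) (p q : P)
    (h : SysBisimilar tr p q) (hp : WellBehaved tr Ed p) :
    WellBehaved tr Ed q := by
  classical
  obtain ⟨B, hB, hpq⟩ := h
  intro ⟨σ, c, ev, hc0, hstep⟩
  have key : ∀ n (x : P), B x (c n).1 →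
      ∃ x', tr (x, (c n).2) (ev n) (x', (c (n+1)).2) ∧ B x' (c (n+1)).1 := by
    intro n x hx
    have h1 := (hB x (c n).1 hx (ev n) (c n).2).2 (c (n+1)).1 (c (n+1)).2
    rw [Prod.mk.eta, Prod.mk.eta] at h1
    exact h1 (hstep n).2
  let g : (n : ℕ) → {x : P // B x (c n).1} := fun n =>
    Nat.rec ⟨p, by rw [hc0]; exact hpq⟩
      (fun k xk => ⟨(key k xk.1 xk.2).choose, (key k xk.1 xk.2).choose_spec.2⟩) n
  have gtr : ∀ n, tr ((g n).1, (c n).2) (ev n) ((g (n+1)).1, (c (n+1)).2) :=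
    fun n => (key n (g n).1 (g n).2).choose_spec.1
  exact hp ⟨σ, fun n => ((g n).1, (c n).2), ev,
    (by refine Prod.ext ?_ ?_ <;> simp [g, hc0]), fun n => ⟨(hstep n).1, gtr n⟩⟩
end

section
/- There exist TDSHAs that are labelled TDSHA bisimilar whose underlying stochastic HYPE models are not stochastic system bisimilar with respect to ≐: the two one-mode systems with ODEs d(X,Y)/dt = (a,b) and d(X,Y)/dt = (a+b,0) (no events) are related by the TDSHA bisimulation B = {((x,y),(x+y,0))} with output functions out₁(X,Y)=X+Y, out₂(X,Y)=X, but the corresponding states are not ≐-equivalent when b ≠ 0. -/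
open Classical

noncomputable section

/-- Flow of the first model: `d(X,Y)/dt = (a, b)`. -/
def flow1 (a b x₀ y₀ t : ℝ) : ℝ × ℝ := (x₀ + a * t, y₀ + b * t)

/-- Flow of the second model: `d(X,Y)/dt = (a + b, 0)`. -/
def flow2 (a b x₀ y₀ t : ℝ) : ℝ × ℝ := (x₀ + y₀ + (a + b) * t, 0)

/-- The TDSHA bisimulation relation `B = {((x,y), (x+y, 0))}`. -/
def Brel (p q : ℝ × ℝ) : Prop := q.1 = p.1 + p.2 ∧ q.2 = 0

/-- Output function of the first model. -/
def out1 (p : ℝ × ℝ) : ℝ := p.1 + p.2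

/-- Output function of the second model. -/
def out2 (p : ℝ × ℝ) : ℝ := p.1

/-- State of the first model: `ι_X ↦ (a, const)`, `ι_Y ↦ (b, const)`
(influences indexed by `Bool`: `false = ι_X`, `true = ι_Y`). -/
def state1 (a b : ℝ) : Bool → ℝ × Unit := fun ι => (if ι then b else a, ())

/-- State of the second model: `ι_X ↦ (a + b, const)`, `ι_Y ↦ (0, const)`. -/
def state2 (a b : ℝ) : Bool → ℝ × Unit := fun ι => (if ι then 0 else a + b, ())

/-- there are labelled-TDSHA-bisimilar TDSHAs whose stochastic
HYPE models are not stochastic system bisimilar with respect to `≐`: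
(i) the relation `B = {((x,y),(x+y,0))}` is invariant under the two flows and
the outputs `out₁(X,Y) = X + Y`, `out₂(X,Y) = X` agree along them; but
(ii) the corresponding states are `≐`-equivalent iff `b = 0` (with
`iv(ι_X) = X`, `iv(ι_Y) = Y`, `⟦const⟧ = 1`). -/
theorem stmt18 (a b x₀ y₀ : ℝ) :
    (∀ t : ℝ, Brel (flow1 a b x₀ y₀ t) (flow2 a b x₀ y₀ t) ∧
      out1 (flow1 a b x₀ y₀ t) = out2 (flow2 a b x₀ y₀ t)) ∧
    (doteq (id : Bool → Bool) (fun _ : Unit => fun _ : Unit => (1 : ℝ))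
        (state1 a b) (state2 a b) ↔ b = 0) := by
  constructor
  · intro t
    refine ⟨⟨?_, rfl⟩, ?_⟩ <;> simp [flow1, flow2, out1, out2] <;> ring
  · constructor
    · intro h
      have := h true (fun _ => (1 : ℝ))
      simpa [ssum, state1, state2, Fintype.sum_bool] using this
    · intro hb
      subst hb
      intro V f
      simp [ssum, state1, state2, Fintype.sum_bool]
end
end
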